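/- Let R be an expanding edge replacement system and Gl_R its gluing automaton. If an infinite sequence (x₀,y₀)(x₁,y₁)… is recognized by Gl_R, then exactly one of the following holds: (1) x_i=y_i for all i and the run stays in the sub-automaton T_R induced by Q₀; or (2) the run of (x₀,y₀)(x₁,y₁)… features exactly one Type 1 transition, which takes place when processing the first letter (x_m,y_m) with x_m≠y_m; moreover, in case (2) the edges x₀…x_m and y₀…y_m are adjacent in the full expansion E_m, and the state of Gl_R after processing (x_m,y_m) is q₁(c(x_m),α;c(y_m),β), where (α,β) is the adjacency type of x₀…x_m and y₀…y_m in E_m in the sense of the Type 1 rule. -/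

import Mathlib

/-!
Formalization of edge replacement systems, their limit-space gluing relation,
and the gluing automaton, following Belk–Forrest and the paper
"Rationality of the gluing of edge replacement systems".
-/

namespace ERSPaper

/-- The five adjacency-type symbols `in`, `out`, `lp`, `db⁺`, `db⁻`. -/
inductive EType : Type
  | inn : EType
  | out : EType
  | lp : EType
  | dbp : EType
  | dbm : EType
  deriving DecidableEq

/-- An edge replacement system satisfying the loop-color assumption.
`V z` / `E z` are the vertices/edges of the base graph (`z = none`) or of the
replacement graph `Γ c` (`z = some c`).  For loop colors the two boundary
vertices coincide (the single boundary vertex `λ_c`); for non-loop colors they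
are distinct.  The field `loop_iff` is the loop-color assumption: an edge is a
loop if and only if its color is a loop color. -/
structure ERS : Type 1 where
  Col : Type
  [colFintype : Fintype Col]
  [colDecEq : DecidableEq Col]
  V : Option Col → Type
  E : Option Col → Type
  [vFintype : ∀ z, Fintype (V z)]
  [eFintype : ∀ z, Fintype (E z)]
  [vDecEq : ∀ z, DecidableEq (V z)]
  ini : ∀ z, E z → V z
  fin : ∀ z, E z → V z
  col : ∀ z, E z → Col
  loopCol : Col → Prop
  bIni : ∀ c : Col, V (some c)
  bFin : ∀ c : Col, V (some c)
  bd_eq_iff : ∀ c : Col, (bIni c = bFin c ↔ loopCol c)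
  loop_iff : ∀ z (e : E z), (ini z e = fin z e ↔ loopCol (col z e))

attribute [instance] ERS.colFintype ERS.colDecEq ERS.vFintype ERS.eFintype ERS.vDecEq

namespace ERS

/-- The alphabet `Σ`: the disjoint union of the edge sets of the base graph and
of all the replacement graphs. -/
def Alph (R : ERS) : Type := Σ z : Option R.Col, R.E z

/-- Membership in the symbol space `Ω_R`: infinite directed walks on the color
graph starting at `q(0)`, i.e. `x₀` is an edge of the base graph and `x_{l+1}`
is an edge of `Γ_{c(x_l)}`. -/
def IsWalk (R : ERS) (x : ℕ → R.Alph) : Prop :=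
  (x 0).1 = none ∧ ∀ l : ℕ, (x (l + 1)).1 = some (R.col (x l).1 (x l).2)

/-- The finite word `x₀ … x_m` belongs to `E_R`. -/
def IsWalkUpTo (R : ERS) (x : ℕ → R.Alph) (m : ℕ) : Prop :=
  (x 0).1 = none ∧ ∀ l : ℕ, l < m → (x (l + 1)).1 = some (R.col (x l).1 (x l).2)

theorem IsWalk.upTo {R : ERS} {x : ℕ → R.Alph} (hx : R.IsWalk x) (m : ℕ) :
    R.IsWalkUpTo x m :=
  ⟨hx.1, fun l _ => hx.2 l⟩

end ERS

/-- A finite graph whose edges are colored by the colors of `R`. -/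
structure GraphData (R : ERS) : Type 1 where
  V : Type
  E : Type
  ι : E → V
  τ : E → V
  col : E → R.Col

/-- An edge is incident on a vertex. -/
def GraphData.IncidentOn {R : ERS} (G : GraphData R) (e : G.E) (v : G.V) : Prop :=
  G.ι e = v ∨ G.τ e = v

/-- Two edges are incident on a common vertex. -/
def GraphData.Adjacent {R : ERS} (G : GraphData R) (e f : G.E) : Prop :=
  ∃ v : G.V, G.IncidentOn e v ∧ G.IncidentOn f v

namespace ERS

/-- When expanding the edge `e`, a vertex `v` of the replacement graph
`Γ_{c(e)}` is attached: boundary vertices go to the endpoints of `e`,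
interior vertices give fresh vertices. -/
def attach (R : ERS) (G : GraphData R) (e : G.E) (v : R.V (some (G.col e))) :
    G.V ⊕ (Σ e : G.E,
      {v : R.V (some (G.col e)) // v ≠ R.bIni (G.col e) ∧ v ≠ R.bFin (G.col e)}) :=
  if h1 : v = R.bIni (G.col e) then Sum.inl (G.ι e)
  else if h2 : v = R.bFin (G.col e) then Sum.inl (G.τ e)
  else Sum.inr ⟨e, v, h1, h2⟩

/-- The simultaneous expansion of every edge of `G`. -/
def expandG (R : ERS) (G : GraphData R) : GraphData R where
  V := G.V ⊕ (Σ e : G.E,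
    {v : R.V (some (G.col e)) // v ≠ R.bIni (G.col e) ∧ v ≠ R.bFin (G.col e)})
  E := Σ e : G.E, R.E (some (G.col e))
  ι := fun p => R.attach G p.1 (R.ini (some (G.col p.1)) p.2)
  τ := fun p => R.attach G p.1 (R.fin (some (G.col p.1)) p.2)
  col := fun p => R.col (some (G.col p.1)) p.2

/-- The base graph, as graph data. -/
def base (R : ERS) : GraphData R :=
  ⟨R.V none, R.E none, R.ini none, R.fin none, R.col none⟩

/-- The full expansion sequence `E_m`. -/
def fullExp (R : ERS) : ℕ → GraphData R
  | 0 => R.base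
  | m + 1 => R.expandG (R.fullExp m)

theorem col_cast (R : ERS) (p : R.Alph) (z : Option R.Col) (h : p.1 = z) :
    R.col z (cast (congrArg R.E h) p.2) = R.col p.1 p.2 := by
  rcases p with ⟨w, e⟩
  cases h
  rfl

/-- The edge of the full expansion `E_m` labeled by the word `x₀ … x_m`,
together with the fact that its color is the color of its last letter. -/
def wordEdge (R : ERS) (x : ℕ → R.Alph) :
    (m : ℕ) → R.IsWalkUpTo x m →
      {e : (R.fullExp m).E // (R.fullExp m).col e = R.col (x m).1 (x m).2}
  | 0, hx => ⟨cast (congrArg R.E hx.1) (x 0).2, R.col_cast (x 0) none hx.1⟩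
  | m + 1, hx =>
    let prev := R.wordEdge x m ⟨hx.1, fun l hl => hx.2 l (Nat.lt_succ_of_lt hl)⟩
    let h : (x (m + 1)).1 = some ((R.fullExp m).col prev.1) :=
      (hx.2 m (Nat.lt_succ_self m)).trans (congrArg some prev.2.symm)
    ⟨⟨prev.1, cast (congrArg R.E h) (x (m + 1)).2⟩, R.col_cast (x (m + 1)) _ h⟩

/-- The gluing relation: two elements of `Ω_R` are glued when, for every large
enough `n`, their length-`(n+1)` prefixes are incident on a common vertex of
the full expansion `E_n`. -/
def Glued (R : ERS) (x y : ℕ → R.Alph) (hx : R.IsWalk x) (hy : R.IsWalk y) : Prop :=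
  ∃ N : ℕ, ∀ n : ℕ, N ≤ n →
    (R.fullExp n).Adjacent (R.wordEdge x n (hx.upTo n)).1 (R.wordEdge y n (hy.upTo n)).1

/-- The expanding condition on a replacement system (formulated after the
identification of the boundary vertices for loop colors). -/
structure Expanding (R : ERS) : Prop where
  no_isolated : ∀ z (v : R.V z), ∃ e : R.E z, R.ini z e = v ∨ R.fin z e = v
  no_bd_edge : ∀ c : R.Col, ¬ R.loopCol c → ∀ e : R.E (some c),
    ¬ ((R.ini (some c) e = R.bIni c ∧ R.fin (some c) e = R.bFin c) ∨
       (R.ini (some c) e = R.bFin c ∧ R.fin (some c) e = R.bIni c))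
  two_edges : ∀ c : R.Col, 2 ≤ Fintype.card (R.E (some c))
  interior : ∀ c : R.Col, ∃ v : R.V (some c), v ≠ R.bIni c ∧ v ≠ R.bFin c

end ERS

/-- `EndAt ι τ v α` : the edge with initial vertex `ι` and terminal vertex `τ`
is incident on `v`, in the fashion recorded by `α`: incoming (`in`), outgoing
(`out`) or a loop (`lp`). -/
inductive EndAt {V : Type} : V → V → V → EType → Prop
  | inn {i v : V} : i ≠ v → EndAt i v v .inn
  | out {t v : V} : v ≠ t → EndAt v t v .out
  | lp {v : V} : EndAt v v v .lp

/-- Two non-loop edges (given by their endpoints) are parallel. -/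
def Parallel {V : Type} (ia ta ib tb : V) : Prop :=
  ia ≠ ta ∧ ((ia = ib ∧ ta = tb) ∨ (ia = tb ∧ ta = ib))

/-- The Type 1 adjacency-type rule for two distinct adjacent edges, given by
their endpoints: parallel non-loops give the `db` types (same or opposite
orientation), and otherwise the unique common vertex `v` determines the types
via `EndAt`. -/
inductive AdjType {V : Type} : V → V → V → V → EType → EType → Prop
  | dbSame {u v : V} : u ≠ v → AdjType u v u v .dbp .dbp
  | dbOpp {u v : V} : u ≠ v → AdjType u v v u .dbp .dbm
  | single {ia ta ib tb v : V} {α β : EType} :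
      ¬ Parallel ia ta ib tb → EndAt ia ta v α → EndAt ib tb v β →
      AdjType ia ta ib tb α β

/-- The states of the gluing automaton `Gl_R`. -/
inductive GlState (R : ERS) : Type
  | q0 : Option R.Col → GlState R
  | q1 : R.Col → EType → R.Col → EType → GlState R

/-- Membership in `Q₀`. -/
def GlState.inQ0 {R : ERS} : GlState R → Prop
  | .q0 _ => True
  | _ => False

/-- Membership in `Q₁`. -/
def GlState.inQ1 {R : ERS} : GlState R → Prop
  | .q1 _ _ _ _ => True
  | _ => False

/-- The defining conditions for states of `Q₁`: `γ ≠ db⁻` and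
(`δ ∈ {db⁺, db⁻}` iff `γ = db⁺`). -/
def GlState.Valid {R : ERS} : GlState R → Prop
  | .q0 _ => True
  | .q1 _ γ _ δ => γ ≠ .dbm ∧ ((δ = .dbp ∨ δ = .dbm) ↔ γ = .dbp)

/-- The tracked boundary vertex of `Γ_c` for a non-`db` symbol:
`τ_c` for `in`, `ι_c` for `out`, and `λ_c` (the identified boundary vertex)
for `lp`. -/
def trackedV (R : ERS) (c : R.Col) : EType → Set (R.V (some c))
  | .inn => {R.bFin c}
  | .out => {R.bIni c}
  | .lp => {R.bIni c}
  | _ => ∅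

/-- The pairs of tracked vertices of a state `q₁(i,γ;j,δ)`. -/
inductive TrackedPair (R : ERS) (i j : R.Col) :
    EType → EType → R.V (some i) → R.V (some j) → Prop
  | nondb {γ δ : EType} {u : R.V (some i)} {w : R.V (some j)} :
      u ∈ trackedV R i γ → w ∈ trackedV R j δ → TrackedPair R i j γ δ u w
  | dbppIni : TrackedPair R i j .dbp .dbp (R.bIni i) (R.bIni j)
  | dbppFin : TrackedPair R i j .dbp .dbp (R.bFin i) (R.bFin j)
  | dbpmIni : TrackedPair R i j .dbp .dbm (R.bIni i) (R.bFin j)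
  | dbpmFin : TrackedPair R i j .dbp .dbm (R.bFin i) (R.bIni j)

/-- The transitions of the gluing automaton `Gl_R`. -/
inductive GlTrans (R : ERS) : GlState R → R.Alph × R.Alph → GlState R → Prop
  | type0 (z : Option R.Col) (e : R.E z) :
      GlTrans R (.q0 z) (⟨z, e⟩, ⟨z, e⟩) (.q0 (some (R.col z e)))
  | type1 (z : Option R.Col) (a b : R.E z) (hab : a ≠ b) {α β : EType}
      (h : AdjType (R.ini z a) (R.fin z a) (R.ini z b) (R.fin z b) α β) :
      GlTrans R (.q0 z) (⟨z, a⟩, ⟨z, b⟩) (.q1 (R.col z a) α (R.col z b) β)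
  | type2 (i j : R.Col) (γ δ : EType) (a : R.E (some i)) (b : R.E (some j))
      {u : R.V (some i)} {w : R.V (some j)}
      (hp : TrackedPair R i j γ δ u w) {α β : EType}
      (ha : EndAt (R.ini (some i) a) (R.fin (some i) a) u α)
      (hb : EndAt (R.ini (some j) b) (R.fin (some j) b) w β) :
      GlTrans R (.q1 i γ j δ) (⟨some i, a⟩, ⟨some j, b⟩)
        (.q1 (R.col (some i) a) α (R.col (some j) b) β)

/-- Infinite runs of `Gl_R` from the initial state `q₀(0)`. -/
def GlRun (R : ERS) (w : ℕ → R.Alph × R.Alph) (q : ℕ → GlState R) : Prop :=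
  q 0 = .q0 none ∧ ∀ l : ℕ, GlTrans R (q l) (w l) (q (l + 1))

/-- `Gl_R` recognizes the infinite sequence `w`. -/
def GlAccepts (R : ERS) (w : ℕ → R.Alph × R.Alph) : Prop :=
  ∃ q : ℕ → GlState R, GlRun R w q

/-- Finite runs of `Gl_R` processing the letters `w 0, …, w m`. -/
def GlRunFin (R : ERS) (w : ℕ → R.Alph × R.Alph) (m : ℕ) (q : ℕ → GlState R) : Prop :=
  q 0 = .q0 none ∧ ∀ l : ℕ, l ≤ m → GlTrans R (q l) (w l) (q (l + 1))

/-- `Gl_R` recognizes the finite word `w 0, …, w m`. -/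
def GlAcceptsFin (R : ERS) (w : ℕ → R.Alph × R.Alph) (m : ℕ) : Prop :=
  ∃ q : ℕ → GlState R, GlRunFin R w m q

/-- The transitions of the full sub-automaton `T_R` induced by `Q₀`. -/
def TTrans (R : ERS) (s : GlState R) (p : R.Alph × R.Alph) (t : GlState R) : Prop :=
  GlTrans R s p t ∧ s.inQ0 ∧ t.inQ0

/-- Finite runs of `T_R` processing the letters `w 0, …, w m`. -/
def TRunFin (R : ERS) (w : ℕ → R.Alph × R.Alph) (m : ℕ) (q : ℕ → GlState R) : Prop :=
  q 0 = .q0 none ∧ ∀ l : ℕ, l ≤ m → TTrans R (q l) (w l) (q (l + 1))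

/-- `T_R` recognizes the finite word `w 0, …, w m`. -/
def TAcceptsFin (R : ERS) (w : ℕ → R.Alph × R.Alph) (m : ℕ) : Prop :=
  ∃ q : ℕ → GlState R, TRunFin R w m q

end ERSPaper

/-!
A run of `Gl_R` stays in `Q₀` exactly as long as it reads diagonal letters `(x, x)`, and `Q₁` is
closed under transitions, so a run leaves `Q₀` at most once, by a Type 1 transition on the first
off-diagonal letter `(x_m, y_m) = (a, b)`, where `a ≠ b` are adjacent edges of one graph `Γ_z`.
Since the two words agree before `m`, the edges `x₀…x_m` and `y₀…y_m` of `E_m` both lie in the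
copy of `Γ_z` that replaced their common parent edge. That copy is embedded injectively in `E_m`,
because boundary vertices are identified only for loop colors, whose edges are loops; and
injective maps of vertices preserve adjacency types.
-/

namespace ERSPaper

open Function

lemma EndAt.map {V W : Type} {f : V → W} (hf : Injective f) {i t v : V} {α : EType}
    (h : EndAt i t v α) : EndAt (f i) (f t) (f v) α := by
  cases h with
  | inn h => exact .inn (hf.ne h)
  | out h => exact .out (hf.ne h)
  | lp => exact .lp

lemma AdjType.map {V W : Type} {f : V → W} (hf : Injective f) {ia ta ib tb : V}
    {α β : EType} (h : AdjType ia ta ib tb α β) :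
    AdjType (f ia) (f ta) (f ib) (f tb) α β := by
  cases h with
  | dbSame h => exact .dbSame (hf.ne h)
  | dbOpp h => exact .dbOpp (hf.ne h)
  | single hnp ha hb =>
    refine .single ?_ (ha.map hf) (hb.map hf)
    rintro ⟨hne, hpar⟩
    exact hnp ⟨hf.ne_iff.1 hne, by simpa only [hf.eq_iff] using hpar⟩

lemma EndAt.incident {V : Type} {i t v : V} {α : EType} (h : EndAt i t v α) :
    i = v ∨ t = v := by
  cases h <;> simp

lemma AdjType.exists_common {V : Type} {ia ta ib tb : V} {α β : EType}
    (h : AdjType ia ta ib tb α β) : ∃ v, (ia = v ∨ ta = v) ∧ (ib = v ∨ tb = v) := by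
  cases h with
  | dbSame => exact ⟨ia, .inl rfl, .inl rfl⟩
  | dbOpp => exact ⟨ia, .inl rfl, .inr rfl⟩
  | single _ ha hb => exact ⟨_, ha.incident, hb.incident⟩

section Expansion

variable {R : ERS}

def GraphData.LoopColAssumption (G : GraphData R) : Prop :=
  ∀ e : G.E, G.ι e = G.τ e ↔ R.loopCol (G.col e)

lemma ERS.attach_injective {G : GraphData R} (hG : G.LoopColAssumption) (e : G.E) :
    Injective (R.attach G e) := by
  have hbd : G.ι e = G.τ e → R.bIni (G.col e) = R.bFin (G.col e) :=
    fun h => (R.bd_eq_iff _).2 ((hG e).1 h)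
  intro v v' h
  unfold ERS.attach at h
  split_ifs at h <;> simp_all

lemma GraphData.LoopColAssumption.expandG {G : GraphData R} (hG : G.LoopColAssumption) :
    (R.expandG G).LoopColAssumption := fun ⟨e, b⟩ =>
  (R.attach_injective hG e).eq_iff.trans (R.loop_iff _ b)

lemma ERS.loopColAssumption_fullExp (m : ℕ) : (R.fullExp m).LoopColAssumption := by
  induction m with
  | zero => exact R.loop_iff none
  | succ m ih => exact ih.expandG

lemma ERS.wordEdge_congr {x y : ℕ → R.Alph} :
    ∀ {m : ℕ} (hx : R.IsWalkUpTo x m) (hy : R.IsWalkUpTo y m),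
      (∀ l ≤ m, x l = y l) → (R.wordEdge x m hx).1 = (R.wordEdge y m hy).1
  | 0, _, _, hxy =>
    eq_of_heq <| (cast_heq _ _).trans <|
      (congr_arg_heq Sigma.snd (hxy 0 le_rfl)).trans (cast_heq _ _).symm
  | _ + 1, _, _, hxy =>
    Sigma.ext (ERS.wordEdge_congr _ _ fun l hl => hxy l (by omega)) <| (cast_heq _ _).trans <|
      (congr_arg_heq Sigma.snd (hxy _ le_rfl)).trans (cast_heq _ _).symm

lemma ERS.apply_cast_snd (F : ∀ z, R.E z → R.V z) {p : R.Alph} {z T : Option R.Col}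
    {b : R.E z} (hp : p = ⟨z, b⟩) (h : p.1 = T) (hz : z = T) :
    F T (cast (congrArg R.E h) p.2) = cast (congrArg R.V hz) (F z b) := by
  subst hp hz
  rfl

lemma ERS.attach_apply_cast (F : ∀ z, R.E z → R.V z) {G : GraphData R} {e e' : G.E}
    (he : e = e') {p : R.Alph} {z : Option R.Col} {b : R.E z} (hp : p = ⟨z, b⟩)
    (h : p.1 = some (G.col e)) (hz : z = some (G.col e')) :
    R.attach G e (F _ (cast (congrArg R.E h) p.2)) =
      R.attach G e' (cast (congrArg R.V hz) (F z b)) := by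
  subst he hp hz
  rfl

lemma ERS.exists_embedding_wordEdge {x : ℕ → R.Alph} {m : ℕ} (hx : R.IsWalkUpTo x m)
    {z : Option R.Col} (hz : (x m).1 = z) :
    ∃ f : R.V z → (R.fullExp m).V, Injective f ∧
      ∀ (y : ℕ → R.Alph) (hy : R.IsWalkUpTo y m) (b : R.E z),
        (∀ l < m, y l = x l) → y m = ⟨z, b⟩ →
          (R.fullExp m).ι (R.wordEdge y m hy).1 = f (R.ini z b) ∧
          (R.fullExp m).τ (R.wordEdge y m hy).1 = f (R.fin z b) := by
  cases m with
  | zero =>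
    have hz₀ : z = none := hz ▸ hx.1
    refine ⟨cast (congrArg R.V hz₀), (cast_bijective _).injective, fun y hy b _ hym => ?_⟩
    exact ⟨R.apply_cast_snd R.ini hym hy.1 hz₀, R.apply_cast_snd R.fin hym hy.1 hz₀⟩
  | succ k =>
    have hx' : R.IsWalkUpTo x k := ⟨hx.1, fun l hl => hx.2 l (by omega)⟩
    have hzk : z = some ((R.fullExp k).col (R.wordEdge x k hx').1) :=
      hz ▸ (hx.2 k k.lt_succ_self).trans (congrArg some (R.wordEdge x k hx').2.symm)
    refine ⟨R.attach _ _ ∘ cast (congrArg R.V hzk),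
      (R.attach_injective (R.loopColAssumption_fullExp k) _).comp ((cast_bijective _).injective),
      fun y hy b hyx hym => ?_⟩
    have hy' : R.IsWalkUpTo y k := ⟨hy.1, fun l hl => hy.2 l (by omega)⟩
    have hparent : (R.wordEdge y k hy').1 = (R.wordEdge x k hx').1 :=
      R.wordEdge_congr _ _ fun l hl => hyx l (by omega)
    have hyk := (hy.2 k k.lt_succ_self).trans (congrArg some (R.wordEdge y k hy').2.symm)
    exact ⟨R.attach_apply_cast R.ini hparent hym hyk hzk,
      R.attach_apply_cast R.fin hparent hym hyk hzk⟩

lemma ERS.adjType_wordEdge {x y : ℕ → R.Alph} {m : ℕ} (hx : R.IsWalkUpTo x m)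
    (hy : R.IsWalkUpTo y m) (hyx : ∀ l < m, y l = x l) {z : Option R.Col} {a b : R.E z}
    (hxm : x m = ⟨z, a⟩) (hym : y m = ⟨z, b⟩) {α β : EType}
    (h : AdjType (R.ini z a) (R.fin z a) (R.ini z b) (R.fin z b) α β) :
    AdjType ((R.fullExp m).ι (R.wordEdge x m hx).1) ((R.fullExp m).τ (R.wordEdge x m hx).1)
      ((R.fullExp m).ι (R.wordEdge y m hy).1) ((R.fullExp m).τ (R.wordEdge y m hy).1) α β := by
  obtain ⟨f, hf, hends⟩ := R.exists_embedding_wordEdge hx (by rw [hxm])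
  obtain ⟨hxι, hxτ⟩ := hends x hx a (fun _ _ => rfl) hxm
  obtain ⟨hyι, hyτ⟩ := hends y hy b hyx hym
  rw [hxι, hxτ, hyι, hyτ]
  exact h.map hf

end Expansion

section Automaton

variable {R : ERS}

lemma GlState.exists_eq_q0 {s : GlState R} (h : s.inQ0) : ∃ z, s = .q0 z := by
  cases s with
  | q0 z => exact ⟨z, rfl⟩
  | q1 => exact h.elim

lemma GlState.inQ1_iff_not_inQ0 {s : GlState R} : s.inQ1 ↔ ¬ s.inQ0 := by
  cases s <;> simp [GlState.inQ0, GlState.inQ1]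

lemma GlTrans.index_eq_of_q0 {z : Option R.Col} {p : R.Alph × R.Alph} {t : GlState R}
    (h : GlTrans R (.q0 z) p t) : p.1.1 = z ∧ p.2.1 = z := by
  cases h <;> exact ⟨rfl, rfl⟩

lemma GlTrans.eq_type0_of_inQ0 {s t : GlState R} {p : R.Alph × R.Alph}
    (h : GlTrans R s p t) (ht : t.inQ0) :
    ∃ z e, s = .q0 z ∧ p = (⟨z, e⟩, ⟨z, e⟩) ∧ t = .q0 (some (R.col z e)) := by
  cases h with
  | type0 z e => exact ⟨z, e, rfl, rfl, rfl⟩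
  | type1 | type2 => exact ht.elim

lemma GlTrans.eq_type1_of_inQ1 {z : Option R.Col} {p : R.Alph × R.Alph} {t : GlState R}
    (h : GlTrans R (.q0 z) p t) (ht : t.inQ1) :
    ∃ (a b : R.E z) (α β : EType), a ≠ b ∧ p = (⟨z, a⟩, ⟨z, b⟩) ∧
      AdjType (R.ini z a) (R.fin z a) (R.ini z b) (R.fin z b) α β ∧
      t = .q1 (R.col z a) α (R.col z b) β := by
  cases h with
  | type0 => exact ht.elim
  | type1 z a b hab hadj => exact ⟨a, b, _, _, hab, rfl, hadj, rfl⟩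

lemma GlTrans.inQ1 {s t : GlState R} {p : R.Alph × R.Alph} (h : GlTrans R s p t)
    (hs : s.inQ1) : t.inQ1 := by
  cases h with
  | type0 | type1 => exact hs.elim
  | type2 => trivial

variable {w : ℕ → R.Alph × R.Alph} {q : ℕ → GlState R}

lemma GlRun.index_zero (hrun : GlRun R w q) : (w 0).1.1 = none ∧ (w 0).2.1 = none :=
  (hrun.1 ▸ hrun.2 0).index_eq_of_q0

lemma GlRun.walk_step (hrun : GlRun R w q) {l : ℕ} (h : (q (l + 1)).inQ0) :
    (w l).1 = (w l).2 ∧ (w (l + 1)).1.1 = some (R.col (w l).1.1 (w l).1.2) ∧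
      (w (l + 1)).2.1 = some (R.col (w l).2.1 (w l).2.2) := by
  obtain ⟨z, e, -, hwl, hql⟩ := (hrun.2 l).eq_type0_of_inQ0 h
  rw [hwl]
  exact ⟨rfl, (hql ▸ hrun.2 (l + 1)).index_eq_of_q0⟩

lemma GlRun.inQ1_of_le (hrun : GlRun R w q) {k l : ℕ} (hk : (q k).inQ1) (hkl : k ≤ l) :
    (q l).inQ1 := by
  induction l, hkl using Nat.le_induction with
  | base => exact hk
  | succ l _ ih => exact (hrun.2 l).inQ1 ih

lemma GlRun.exists_exit (hrun : GlRun R w q) (h : ¬ ∀ l, (q l).inQ0) :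
    ∃ m, (∀ l ≤ m, (q l).inQ0) ∧ (q (m + 1)).inQ1 := by
  by_contra! hstay
  refine h fun l => ?_
  induction l using Nat.strong_induction_on with
  | _ l ih =>
    cases l with
    | zero => exact hrun.1 ▸ trivial
    | succ m =>
      exact not_not.1 fun hm => hstay m (fun k hk => ih k (by omega))
        (GlState.inQ1_iff_not_inQ0.2 hm)

lemma GlRun.exit_unique (hrun : GlRun R w q) {m : ℕ} (hQ0 : ∀ l ≤ m, (q l).inQ0)
    (hQ1 : (q (m + 1)).inQ1) (l : ℕ) : (q l).inQ0 ∧ (q (l + 1)).inQ1 ↔ l = m := by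
  refine ⟨fun ⟨hl0, hl1⟩ => ?_, fun hl => hl ▸ ⟨hQ0 m le_rfl, hQ1⟩⟩
  by_contra hne
  rcases Nat.lt_or_gt_of_ne hne with hlt | hgt
  · exact GlState.inQ1_iff_not_inQ0.1 hl1 (hQ0 (l + 1) hlt)
  · exact GlState.inQ1_iff_not_inQ0.1 (hrun.inQ1_of_le hQ1 hgt) hl0

end Automaton

theorem type1_transition_implies_adjacency_general (R : ERS)
    (w : ℕ → R.Alph × R.Alph) (q : ℕ → GlState R) (hrun : GlRun R w q) :
    Xor'
      ((∀ i : ℕ, (w i).1 = (w i).2) ∧ ∀ l : ℕ, (q l).inQ0)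
      (∃ m : ℕ,
        (w m).1 ≠ (w m).2 ∧ (∀ l < m, (w l).1 = (w l).2) ∧
        (∀ l : ℕ, ((q l).inQ0 ∧ (q (l + 1)).inQ1) ↔ l = m) ∧
        ∃ (hx : R.IsWalkUpTo (fun n => (w n).1) m)
          (hy : R.IsWalkUpTo (fun n => (w n).2) m),
          (R.fullExp m).Adjacent (R.wordEdge (fun n => (w n).1) m hx).1
            (R.wordEdge (fun n => (w n).2) m hy).1 ∧
          ∃ α β : EType,
            q (m + 1) =
              .q1 (R.col ((w m).1).1 ((w m).1).2) α
                  (R.col ((w m).2).1 ((w m).2).2) β ∧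
            AdjType ((R.fullExp m).ι (R.wordEdge (fun n => (w n).1) m hx).1)
                    ((R.fullExp m).τ (R.wordEdge (fun n => (w n).1) m hx).1)
                    ((R.fullExp m).ι (R.wordEdge (fun n => (w n).2) m hy).1)
                    ((R.fullExp m).τ (R.wordEdge (fun n => (w n).2) m hy).1)
                    α β) := by
  by_cases hall : ∀ l, (q l).inQ0
  · refine .inl ⟨⟨fun i => (hrun.walk_step (hall (i + 1))).1, hall⟩, ?_⟩
    rintro ⟨m, -, -, hexit, -⟩
    exact GlState.inQ1_iff_not_inQ0.1 ((hexit m).2 rfl).2 (hall (m + 1))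
  obtain ⟨m, hQ0, hQ1⟩ := hrun.exists_exit hall
  obtain ⟨z, hqm⟩ := GlState.exists_eq_q0 (hQ0 m le_rfl)
  obtain ⟨a, b, α, β, hab, hwm, hadj, hqm'⟩ := (hqm ▸ hrun.2 m).eq_type1_of_inQ1 hQ1
  have hdiag : ∀ l < m, (w l).1 = (w l).2 := fun l hl => (hrun.walk_step (hQ0 (l + 1) hl)).1
  have hx : R.IsWalkUpTo (fun n => (w n).1) m :=
    ⟨hrun.index_zero.1, fun l hl => (hrun.walk_step (hQ0 (l + 1) hl)).2.1⟩
  have hy : R.IsWalkUpTo (fun n => (w n).2) m :=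
    ⟨hrun.index_zero.2, fun l hl => (hrun.walk_step (hQ0 (l + 1) hl)).2.2⟩
  have hAdj := R.adjType_wordEdge hx hy (fun l hl => (hdiag l hl).symm)
    (congrArg Prod.fst hwm) (congrArg Prod.snd hwm) hadj
  refine .inr ⟨⟨m, ?_, hdiag, hrun.exit_unique hQ0 hQ1, hx, hy, hAdj.exists_common, α, β,
    by rw [hqm', hwm], hAdj⟩, fun h => GlState.inQ1_iff_not_inQ0.1 hQ1 (h.2 (m + 1))⟩
  rw [hwm]
  exact fun h => hab (eq_of_heq (Sigma.mk.inj h).2)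

/-- Type 1 transition implies adjacency.  If the infinite
sequence `(x₀,y₀)(x₁,y₁)…` is recognized by `Gl_R` (via the run `q`), then
exactly one of the following holds: (1) `x_i = y_i` for all `i` and the run
stays in the sub-automaton `T_R` induced by `Q₀`; or (2) the run features
exactly one Type 1 transition, taking place when processing the first letter
`(x_m,y_m)` with `x_m ≠ y_m`; moreover `x₀…x_m` and `y₀…y_m` are adjacent
edges of the full expansion `E_m`, and the state reached after processing
`(x_m,y_m)` is `q₁(c(x_m),α;c(y_m),β)` where `(α,β)` is the adjacency type of
`x₀…x_m` and `y₀…y_m` in `E_m` in the sense of the Type 1 rule. -/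
theorem type1_transition_implies_adjacency (R : ERS) (hR : R.Expanding)
    (w : ℕ → R.Alph × R.Alph) (q : ℕ → GlState R) (hrun : GlRun R w q) :
    Xor'
      ((∀ i : ℕ, (w i).1 = (w i).2) ∧ ∀ l : ℕ, (q l).inQ0)
      (∃ m : ℕ,
        (w m).1 ≠ (w m).2 ∧ (∀ l < m, (w l).1 = (w l).2) ∧
        (∀ l : ℕ, ((q l).inQ0 ∧ (q (l + 1)).inQ1) ↔ l = m) ∧
        ∃ (hx : R.IsWalkUpTo (fun n => (w n).1) m)
          (hy : R.IsWalkUpTo (fun n => (w n).2) m),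
          (R.fullExp m).Adjacent (R.wordEdge (fun n => (w n).1) m hx).1
            (R.wordEdge (fun n => (w n).2) m hy).1 ∧
          ∃ α β : EType,
            q (m + 1) =
              .q1 (R.col ((w m).1).1 ((w m).1).2) α
                  (R.col ((w m).2).1 ((w m).2).2) β ∧
            AdjType ((R.fullExp m).ι (R.wordEdge (fun n => (w n).1) m hx).1)
                    ((R.fullExp m).τ (R.wordEdge (fun n => (w n).1) m hx).1)
                    ((R.fullExp m).ι (R.wordEdge (fun n => (w n).2) m hy).1)
                    ((R.fullExp m).τ (R.wordEdge (fun n => (w n).2) m hy).1)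
                    α β) :=
  type1_transition_implies_adjacency_general R w q hrun

end ERSPaper
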